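/- arXiv:1106.0380 — 2 statements merged into one kernel-verified Lean document; each statement's English description precedes it below -/
import Mathlib

section
/- Lemma 1: Consider a single-state discrete memoryless MAC P_{Y|W,X1,X2} with state pmf P_W, and suppose that the capacity of this MAC without side information but with full cooperation is zero, i.e., for every pmf Q on 𝒳1×𝒳2 the mutual information I(X1,X2;Y) computed under the joint distribution Q(x1,x2)·Σ_w P_W(w)·P_{Y|W,X1,X2}(y|w,x1,x2) equals zero. Then for every tuple (U,V,V1,V2,X1,X2,W,Y) of finitely supported random variables whose joint pmf factors as P_U(u)·P_{X1|U}(x1|u)·P_{X2|U}(x2|u)·P_W(w)·P_{V|W}(v|w)·P_{V1|W,X1}(v1|w,x1)·P_{V2|W,X2}(v2|w,x2)·P_{Y|W,X1,X2}(y|w,x1,x2), and every choice of nonnegative reals R0, R0⁽¹⁾, R0⁽²⁾, R1, R2 satisfying R0+R1+R2+R0⁽¹⁾+R0⁽²⁾ ≤ I(X1,X2;Y,V1,V2,V) and R0⁽¹⁾+R0⁽²⁾+R0 ≥ I(X1,X2,W;V1,V2,V|Y), one must have R1 = 0 and R2 = 0. -/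
attribute [local instance] Classical.propDecidable

/-- The distribution (pmf) of a random variable `X` on the finite sample space `Ω`
equipped with the pmf `p`. -/
noncomputable def distOf {Ω α : Type*} [Fintype Ω] (p : Ω → ℝ) (X : Ω → α) (a : α) : ℝ :=
  ∑ ω, if X ω = a then p ω else 0

/-- `p` is a probability mass function. -/
def IsPMF {Ω : Type*} [Fintype Ω] (p : Ω → ℝ) : Prop :=
  (∀ ω, 0 ≤ p ω) ∧ ∑ ω, p ω = 1

/-- Shannon entropy (in bits) of the random variable `X`. -/
noncomputable def ent {Ω α : Type*} [Fintype Ω] [Fintype α] (p : Ω → ℝ) (X : Ω → α) : ℝ :=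
  ∑ a : α, -(distOf p X a * Real.logb 2 (distOf p X a))

/-- Conditional entropy `H(X|Y)` in bits. -/
noncomputable def condEnt {Ω α β : Type*} [Fintype Ω] [Fintype α] [Fintype β]
    (p : Ω → ℝ) (X : Ω → α) (Y : Ω → β) : ℝ :=
  ent p (fun ω => (X ω, Y ω)) - ent p Y

/-- Mutual information `I(X;Y)` in bits. -/
noncomputable def mi {Ω α β : Type*} [Fintype Ω] [Fintype α] [Fintype β]
    (p : Ω → ℝ) (X : Ω → α) (Y : Ω → β) : ℝ :=
  ent p X + ent p Y - ent p (fun ω => (X ω, Y ω))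

/-- Conditional mutual information `I(X;Y|Z)` in bits. -/
noncomputable def cmi {Ω α β γ : Type*} [Fintype Ω] [Fintype α] [Fintype β] [Fintype γ]
    (p : Ω → ℝ) (X : Ω → α) (Y : Ω → β) (Z : Ω → γ) : ℝ :=
  ent p (fun ω => (X ω, Z ω)) + ent p (fun ω => (Y ω, Z ω))
    - ent p (fun ω => (X ω, Y ω, Z ω)) - ent p Z


/-!
By the chain rule, `I(X₁X₂; Y V₁V₂V) = I(X₁X₂; Y) + I(X₁X₂; V₁V₂V | Y)`, and the last term is at
most `I(X₁X₂W; V₁V₂V | Y)` because discarding `W` from the first argument of a conditional mutual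
information can only decrease it (nonnegativity of `I(W; V₁V₂V | X₁X₂Y)`). Under the factorization,
`(X₁, X₂)` reaches `Y` through the averaged channel `∑_w P_W(w) P_{Y|W,X₁,X₂}`, so `I(X₁X₂; Y) = 0`
by the zero-capacity hypothesis. The two rate constraints then give `R₁ + R₂ ≤ 0`.
-/

open Finset Function Real

section Distribution

variable {Ω α β : Type*} [Fintype Ω] (p : Ω → ℝ)

lemma distOf_nonneg (hp : ∀ ω, 0 ≤ p ω) (X : Ω → α) (a : α) : 0 ≤ distOf p X a :=
  sum_nonneg fun ω _ => by split <;> simp [hp ω]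

lemma sum_distOf [Fintype α] (X : Ω → α) : ∑ a, distOf p X a = ∑ ω, p ω := by
  simp only [distOf]
  rw [sum_comm]
  simp

lemma isPMF_distOf [Fintype α] (hp : IsPMF p) (X : Ω → α) : IsPMF (distOf p X) :=
  ⟨distOf_nonneg p hp.1 X, by rw [sum_distOf, hp.2]⟩

lemma distOf_distOf [Fintype α] (X : Ω → α) (f : α → β) :
    distOf (distOf p X) f = distOf p (fun ω => f (X ω)) := by
  funext b
  simp only [distOf, ite_sum_zero]
  rw [sum_comm]
  refine sum_congr rfl fun ω _ => ?_
  rw [sum_eq_single (X ω) (fun a _ ha => by simp [Ne.symm ha]) (by simp)]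
  simp

end Distribution

section Marginals

variable {Ω α β γ : Type*} [Fintype Ω] (p : Ω → ℝ)

lemma distOf_comp_apply_of_injective {f : α → β} (hf : Injective f) (X : Ω → α) (a : α) :
    distOf p (fun ω => f (X ω)) (f a) = distOf p X a := by
  simp only [distOf, hf.eq_iff]

lemma distOf_le_distOf_comp (hp : ∀ ω, 0 ≤ p ω) (f : α → β) (X : Ω → α) (a : α) :
    distOf p X a ≤ distOf p (fun ω => f (X ω)) (f a) :=
  sum_le_sum fun ω _ => by split_ifs <;> simp_all

lemma sum_distOf_pair_left [Fintype α] (X : Ω → α) (Z : Ω → γ) (z : γ) :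
    ∑ x, distOf p (fun ω => (X ω, Z ω)) (x, z) = distOf p Z z := by
  simp only [distOf, Prod.mk.injEq, ite_and]
  rw [sum_comm]
  simp

lemma sum_distOf_pair_right [Fintype γ] (X : Ω → α) (Z : Ω → γ) (x : α) :
    ∑ z, distOf p (fun ω => (X ω, Z ω)) (x, z) = distOf p X x := by
  simp only [distOf, Prod.mk.injEq, ite_and]
  rw [sum_comm]
  simp

lemma distOf_pair_eq_distOf_mul [Fintype γ] {s : α → ℝ} {K : α → γ → ℝ}
    (hK : ∀ a, ∑ c, K a c = 1) {X : Ω → α} {Z : Ω → γ}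
    (h : ∀ a c, distOf p (fun ω => (X ω, Z ω)) (a, c) = s a * K a c) :
    distOf p (fun ω => (X ω, Z ω)) = fun t => distOf p X t.1 * K t.1 t.2 := by
  have hX : ∀ a, distOf p X a = s a := fun a => by
    rw [← sum_distOf_pair_right p X Z a]
    simp only [h, ← mul_sum, hK, mul_one]
  funext ⟨a, c⟩
  rw [h, hX]

end Marginals

section Entropy

variable {Ω α β γ : Type*} [Fintype Ω] [Fintype α] [Fintype β] (p : Ω → ℝ)

lemma sum_distOf_mul (X : Ω → α) (g : α → ℝ) :
    ∑ a, distOf p X a * g a = ∑ ω, p ω * g (X ω) := by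
  simp only [distOf, ite_mul, zero_mul, sum_mul]
  rw [sum_comm]
  simp

lemma ent_eq_neg_sum (X : Ω → α) : ent p X = -∑ ω, p ω * logb 2 (distOf p X (X ω)) := by
  rw [ent, sum_neg_distrib, sum_distOf_mul]

lemma ent_comp_of_injective {f : α → β} (hf : Injective f) (X : Ω → α) :
    ent p (fun ω => f (X ω)) = ent p X := by
  simp only [ent_eq_neg_sum, distOf_comp_apply_of_injective p hf]

lemma ent_distOf (X : Ω → α) (f : α → β) : ent (distOf p X) f = ent p (fun ω => f (X ω)) := by
  simp only [ent, distOf_distOf]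

lemma mi_eq_mi_distOf (X : Ω → α) (Y : Ω → β) :
    mi p X Y = mi (distOf p (fun ω => (X ω, Y ω))) Prod.fst Prod.snd := by
  simp only [mi, ent_distOf]

end Entropy

lemma sub_le_mul_log_div {q r : ℝ} (hq : 0 ≤ q) (hr : 0 ≤ r) (hqr : 0 < q → 0 < r) :
    q - r ≤ q * log (q / r) := by
  rcases hq.eq_or_lt with rfl | hq
  · simpa using hr
  have hr := hqr hq
  have h := mul_le_mul_of_nonneg_left (self_sub_one_le_mul_log (div_nonneg hq.le hr.le)) hr.le
  field_simp at h
  linarith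

section ConditionalMutualInformation

variable {Ω α β γ : Type*} [Fintype Ω] [Fintype α] [Fintype β] [Fintype γ] (p : Ω → ℝ)

lemma cmi_eq_sum (X : Ω → α) (Y : Ω → β) (Z : Ω → γ) :
    cmi p X Y Z = ∑ t : α × β × γ, distOf p (fun ω => (X ω, Y ω, Z ω)) t *
      (logb 2 (distOf p (fun ω => (X ω, Y ω, Z ω)) t) + logb 2 (distOf p Z t.2.2)
        - logb 2 (distOf p (fun ω => (X ω, Z ω)) (t.1, t.2.2))
        - logb 2 (distOf p (fun ω => (Y ω, Z ω)) (t.2.1, t.2.2))) := by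
  rw [sum_distOf_mul]
  simp only [cmi, ent_eq_neg_sum, ← sum_sub_distrib, ← sum_add_distrib, ← sum_neg_distrib]
  refine sum_congr rfl fun ω _ => ?_
  ring

lemma cmi_nonneg (hp : IsPMF p) (X : Ω → α) (Y : Ω → β) (Z : Ω → γ) : 0 ≤ cmi p X Y Z := by
  set J := distOf p (fun ω => (X ω, Y ω, Z ω))
  set a := distOf p (fun ω => (X ω, Z ω))
  set b := distOf p (fun ω => (Y ω, Z ω))
  set c := distOf p Z
  -- `r (x, y, z) = P(x | z) P(y | z) P(z)`; `cmi` is the divergence of the joint law from `r`.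
  set r : α × β × γ → ℝ := fun t => a (t.1, t.2.2) * b (t.2.1, t.2.2) / c t.2.2
  have hJ : ∀ t, 0 ≤ J t := distOf_nonneg p hp.1 _
  have hpos : ∀ t, 0 < J t → 0 < a (t.1, t.2.2) ∧ 0 < b (t.2.1, t.2.2) ∧ 0 < c t.2.2 :=
    fun t ht => ⟨ht.trans_le (distOf_le_distOf_comp p hp.1 (fun t => (t.1, t.2.2)) _ t),
      ht.trans_le (distOf_le_distOf_comp p hp.1 (fun t => (t.2.1, t.2.2)) _ t),
      ht.trans_le (distOf_le_distOf_comp p hp.1 (fun t => t.2.2) _ t)⟩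
  have hterm : ∀ t, J t * (logb 2 (J t) + logb 2 (c t.2.2) - logb 2 (a (t.1, t.2.2))
      - logb 2 (b (t.2.1, t.2.2))) = J t * log (J t / r t) / log 2 := by
    intro t
    rcases (hJ t).eq_or_lt with h | h
    · simp [← h]
    obtain ⟨ha, hb, hc⟩ := hpos t h
    rw [log_div h.ne' (by positivity), log_div (mul_pos ha hb).ne' hc.ne', log_mul ha.ne' hb.ne']
    simp only [logb]
    ring
  have hr_sum : ∑ t, r t = ∑ t, J t :=
    calc ∑ t, r t = ∑ z, (∑ x, a (x, z)) * (∑ y, b (y, z)) / c z := by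
          simp only [r, Fintype.sum_prod_type_right, sum_mul_sum, sum_div]
          exact sum_congr rfl fun z _ => sum_comm
      _ = ∑ z, c z := by simp only [a, b, c, sum_distOf_pair_left, mul_self_div_self]
      _ = ∑ t, J t := by rw [sum_distOf, sum_distOf]
  rw [cmi_eq_sum, sum_congr rfl fun t _ => hterm t, ← sum_div]
  refine div_nonneg ?_ (log_nonneg one_le_two)
  calc (0 : ℝ) = ∑ t, (J t - r t) := by rw [sum_sub_distrib, hr_sum, sub_self]
    _ ≤ ∑ t, J t * log (J t / r t) := sum_le_sum fun t _ => sub_le_mul_log_div (hJ t)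
        (div_nonneg (mul_nonneg (distOf_nonneg p hp.1 _ _) (distOf_nonneg p hp.1 _ _))
          (distOf_nonneg p hp.1 _ _))
        fun h => by obtain ⟨ha, hb, hc⟩ := hpos t h; positivity

end ConditionalMutualInformation

section ChainRule

variable {Ω α β γ δ : Type*} [Fintype Ω] [Fintype α] [Fintype β] [Fintype γ] [Fintype δ]
  (p : Ω → ℝ)

lemma mi_pair_right (A : Ω → α) (B : Ω → β) (C : Ω → γ) :
    mi p A (fun ω => (B ω, C ω)) = mi p A B + cmi p A C B := by
  have e₁ : ent p (fun ω => (C ω, B ω)) = ent p (fun ω => (B ω, C ω)) :=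
    ent_comp_of_injective p Prod.swap_injective fun ω => (B ω, C ω)
  have e₂ : ent p (fun ω => (A ω, C ω, B ω)) = ent p (fun ω => (A ω, B ω, C ω)) :=
    ent_comp_of_injective p (injective_id.prodMap Prod.swap_injective)
      fun ω => (A ω, B ω, C ω)
  simp only [mi, cmi]
  linarith

lemma cmi_pair_left (A : Ω → α) (W : Ω → δ) (C : Ω → γ) (B : Ω → β) :
    cmi p (fun ω => (A ω, W ω)) C B = cmi p A C B + cmi p W C (fun ω => (A ω, B ω)) := by
  have e₁ : ent p (fun ω => ((A ω, W ω), B ω)) = ent p (fun ω => (W ω, A ω, B ω)) :=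
    ent_comp_of_injective p (f := fun t : δ × α × β => ((t.2.1, t.1), t.2.2))
      (by intro s t h; simp_all [Prod.ext_iff]) fun ω => (W ω, A ω, B ω)
  have e₂ : ent p (fun ω => ((A ω, W ω), C ω, B ω)) = ent p (fun ω => (W ω, C ω, A ω, B ω)) :=
    ent_comp_of_injective p (f := fun t : δ × γ × α × β => ((t.2.2.1, t.1), t.2.1, t.2.2.2))
      (by intro s t h; simp_all [Prod.ext_iff]) fun ω => (W ω, C ω, A ω, B ω)
  have e₃ : ent p (fun ω => (A ω, C ω, B ω)) = ent p (fun ω => (C ω, A ω, B ω)) :=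
    ent_comp_of_injective p (f := fun t : γ × α × β => (t.2.1, t.1, t.2.2))
      (by intro s t h; simp_all [Prod.ext_iff]) fun ω => (C ω, A ω, B ω)
  simp only [cmi]
  linarith

lemma cmi_comp_left_le (hp : IsPMF p) (f : α → δ) (G : Ω → α) (C : Ω → γ) (B : Ω → β) :
    cmi p (fun ω => f (G ω)) C B ≤ cmi p G C B := by
  have hG : cmi p G C B = cmi p (fun ω => (f (G ω), G ω)) C B := by
    have e₁ : ent p (fun ω => ((f (G ω), G ω), B ω)) = ent p (fun ω => (G ω, B ω)) :=
      ent_comp_of_injective p (f := fun t : α × β => ((f t.1, t.1), t.2))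
        (by intro s t h; simp_all [Prod.ext_iff]) fun ω => (G ω, B ω)
    have e₂ : ent p (fun ω => ((f (G ω), G ω), C ω, B ω)) = ent p (fun ω => (G ω, C ω, B ω)) :=
      ent_comp_of_injective p (f := fun t : α × γ × β => ((f t.1, t.1), t.2))
        (by intro s t h; simp_all [Prod.ext_iff]) fun ω => (G ω, C ω, B ω)
    simp only [cmi]
    linarith
  rw [hG, cmi_pair_left]
  linarith [cmi_nonneg p hp G C fun ω => (f (G ω), B ω)]

end ChainRule

lemma sum_sum_mul_kernel_mul {𝒱 𝒲 : Type*} [Fintype 𝒱] [Fintype 𝒲] (g h : 𝒲 → ℝ)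
    {k : 𝒱 → 𝒲 → ℝ} (hk : ∀ w, ∑ v, k v w = 1) :
    ∑ v, ∑ w, g w * k v w * h w = ∑ w, g w * h w := by
  rw [sum_comm]
  refine sum_congr rfl fun w _ => ?_
  rw [← sum_mul, ← mul_sum, hk, mul_one]

lemma sum_sum_mul_eq_one {ι κ : Type*} [Fintype ι] [Fintype κ] {q : ι → ℝ} (hq : ∑ i, q i = 1)
    {k : κ → ι → ℝ} (hk : ∀ i, ∑ y, k y i = 1) : ∑ y, ∑ i, q i * k y i = 1 := by
  rw [sum_comm]
  simp only [← mul_sum, hk, mul_one, hq]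

section Channel

variable {Ω 𝒰 𝒱 𝒱1 𝒱2 𝒳1 𝒳2 𝒲 𝒴 : Type*}
  [Fintype Ω] [Fintype 𝒰] [Fintype 𝒱] [Fintype 𝒱1] [Fintype 𝒱2]
  [Fintype 𝒳1] [Fintype 𝒳2] [Fintype 𝒲] [Fintype 𝒴]

lemma distOf_inputs_output (p : Ω → ℝ)
    (U : Ω → 𝒰) (V : Ω → 𝒱) (V1 : Ω → 𝒱1) (V2 : Ω → 𝒱2)
    (X1 : Ω → 𝒳1) (X2 : Ω → 𝒳2) (W : Ω → 𝒲) (Y : Ω → 𝒴)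
    (pU : 𝒰 → ℝ) (pX1 : 𝒳1 → 𝒰 → ℝ) (pX2 : 𝒳2 → 𝒰 → ℝ) (pW : 𝒲 → ℝ) (pV : 𝒱 → 𝒲 → ℝ)
    (pV1 : 𝒱1 → 𝒲 → 𝒳1 → ℝ) (pV2 : 𝒱2 → 𝒲 → 𝒳2 → ℝ) (chan : 𝒴 → 𝒲 → 𝒳1 → 𝒳2 → ℝ)
    (hV : ∀ w, ∑ v, pV v w = 1) (hV1 : ∀ w x1, ∑ v1, pV1 v1 w x1 = 1)
    (hV2 : ∀ w x2, ∑ v2, pV2 v2 w x2 = 1)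
    (hjoint : ∀ u v v1 v2 x1 x2 w y,
      distOf p (fun ω => (U ω, V ω, V1 ω, V2 ω, X1 ω, X2 ω, W ω, Y ω))
          (u, v, v1, v2, x1, x2, w, y)
        = pU u * pX1 x1 u * pX2 x2 u * pW w * pV v w * pV1 v1 w x1 * pV2 v2 w x2 *
          chan y w x1 x2)
    (x1 : 𝒳1) (x2 : 𝒳2) (y : 𝒴) :
    distOf p (fun ω => ((X1 ω, X2 ω), Y ω)) ((x1, x2), y)
      = (∑ u, pU u * pX1 x1 u * pX2 x2 u) * ∑ w, pW w * chan y w x1 x2 := by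
  have hpush : distOf p (fun ω => ((X1 ω, X2 ω), Y ω))
      = distOf (distOf p fun ω => (U ω, V ω, V1 ω, V2 ω, X1 ω, X2 ω, W ω, Y ω))
          fun t => ((t.2.2.2.2.1, t.2.2.2.2.2.1), t.2.2.2.2.2.2.2) := by
    rw [distOf_distOf]
  rw [hpush, distOf]
  simp only [Fintype.sum_prod_type, Prod.mk.injEq, ite_and, sum_ite_eq', mem_univ, if_true,
    sum_ite_irrel, sum_const_zero, hjoint, sum_sum_mul_kernel_mul _ _ (hV2 · x2),
    sum_sum_mul_kernel_mul _ _ (hV1 · x1), sum_sum_mul_kernel_mul _ _ hV]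
  rw [sum_mul_sum]
  simp only [mul_assoc]

end Channel

theorem stmt_5_general
    {Ω 𝒰 𝒱 𝒱1 𝒱2 𝒳1 𝒳2 𝒲 𝒴 : Type*}
    [Fintype Ω] [Fintype 𝒰] [Fintype 𝒱] [Fintype 𝒱1] [Fintype 𝒱2]
    [Fintype 𝒳1] [Fintype 𝒳2] [Fintype 𝒲] [Fintype 𝒴]
    (pW : 𝒲 → ℝ) (hpW : IsPMF pW)
    (chan : 𝒴 → 𝒲 → 𝒳1 → 𝒳2 → ℝ)
    (hchan : ∀ w x1 x2, (∀ y, 0 ≤ chan y w x1 x2) ∧ ∑ y, chan y w x1 x2 = 1)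
    (hcoop : ∀ Q : 𝒳1 × 𝒳2 → ℝ, IsPMF Q →
      mi (fun z : (𝒳1 × 𝒳2) × 𝒴 => Q z.1 * ∑ w, pW w * chan z.2 w z.1.1 z.1.2)
        (fun z => z.1) (fun z => z.2) = 0)
    (p : Ω → ℝ) (hp : IsPMF p)
    (U : Ω → 𝒰) (V : Ω → 𝒱) (V1 : Ω → 𝒱1) (V2 : Ω → 𝒱2)
    (X1 : Ω → 𝒳1) (X2 : Ω → 𝒳2) (W : Ω → 𝒲) (Y : Ω → 𝒴)
    (hfac : ∃ (pU : 𝒰 → ℝ) (pX1 : 𝒳1 → 𝒰 → ℝ) (pX2 : 𝒳2 → 𝒰 → ℝ) (pV : 𝒱 → 𝒲 → ℝ)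
      (pV1 : 𝒱1 → 𝒲 → 𝒳1 → ℝ) (pV2 : 𝒱2 → 𝒲 → 𝒳2 → ℝ),
      IsPMF pU ∧
      (∀ u, (∀ x1, 0 ≤ pX1 x1 u) ∧ ∑ x1, pX1 x1 u = 1) ∧
      (∀ u, (∀ x2, 0 ≤ pX2 x2 u) ∧ ∑ x2, pX2 x2 u = 1) ∧
      (∀ w, (∀ v, 0 ≤ pV v w) ∧ ∑ v, pV v w = 1) ∧
      (∀ w x1, (∀ v1, 0 ≤ pV1 v1 w x1) ∧ ∑ v1, pV1 v1 w x1 = 1) ∧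
      (∀ w x2, (∀ v2, 0 ≤ pV2 v2 w x2) ∧ ∑ v2, pV2 v2 w x2 = 1) ∧
      ∀ u v v1 v2 x1 x2 w y,
        distOf p (fun ω => (U ω, V ω, V1 ω, V2 ω, X1 ω, X2 ω, W ω, Y ω))
            (u, v, v1, v2, x1, x2, w, y)
          = pU u * pX1 x1 u * pX2 x2 u * pW w * pV v w * pV1 v1 w x1 * pV2 v2 w x2 *
            chan y w x1 x2)
    (R0 R01 R02 R1 R2 : ℝ)
    (hR1nn : 0 ≤ R1) (hR2nn : 0 ≤ R2)
    (hub : R0 + R1 + R2 + R01 + R02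
      ≤ mi p (fun ω => (X1 ω, X2 ω)) (fun ω => (Y ω, V1 ω, V2 ω, V ω)))
    (hlb : R01 + R02 + R0
      ≥ cmi p (fun ω => (X1 ω, X2 ω, W ω)) (fun ω => (V1 ω, V2 ω, V ω)) Y) :
    R1 = 0 ∧ R2 = 0 := by
  obtain ⟨pU, pX1, pX2, pV, pV1, pV2, -, -, -, hV, hV1, hV2, hjoint⟩ := hfac
  have hlaw : distOf p (fun ω => ((X1 ω, X2 ω), Y ω)) = fun z =>
      distOf p (fun ω => (X1 ω, X2 ω)) z.1 * ∑ w, pW w * chan z.2 w z.1.1 z.1.2 :=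
    distOf_pair_eq_distOf_mul p
      (fun x : 𝒳1 × 𝒳2 => sum_sum_mul_eq_one hpW.2 fun w => (hchan w x.1 x.2).2)
      fun x y => distOf_inputs_output p U V V1 V2 X1 X2 W Y pU pX1 pX2 pW pV pV1 pV2 chan
        (fun w => (hV w).2) (fun w x1 => (hV1 w x1).2) (fun w x2 => (hV2 w x2).2) hjoint
        x.1 x.2 y
  have hmi_XY : mi p (fun ω => (X1 ω, X2 ω)) Y = 0 := by
    rw [mi_eq_mi_distOf, hlaw]
    exact hcoop _ (isPMF_distOf p hp _)
  have hmono : cmi p (fun ω => (X1 ω, X2 ω)) (fun ω => (V1 ω, V2 ω, V ω)) Y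
      ≤ cmi p (fun ω => (X1 ω, X2 ω, W ω)) (fun ω => (V1 ω, V2 ω, V ω)) Y :=
    cmi_comp_left_le p hp (fun t : 𝒳1 × 𝒳2 × 𝒲 => (t.1, t.2.1)) (fun ω => (X1 ω, X2 ω, W ω))
      (fun ω => (V1 ω, V2 ω, V ω)) Y
  have hchain := mi_pair_right p (fun ω => (X1 ω, X2 ω)) Y fun ω => (V1 ω, V2 ω, V ω)
  constructor <;> linarith

/-- Lemma 1 of the paper: if the full-cooperation no-SI capacity of the
MAC is zero, then the new inner bound contains only the all-zero rate tuple. -/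
theorem stmt_5
    {Ω 𝒰 𝒱 𝒱1 𝒱2 𝒳1 𝒳2 𝒲 𝒴 : Type*}
    [Fintype Ω] [Fintype 𝒰] [Fintype 𝒱] [Fintype 𝒱1] [Fintype 𝒱2]
    [Fintype 𝒳1] [Fintype 𝒳2] [Fintype 𝒲] [Fintype 𝒴]
    (pW : 𝒲 → ℝ) (hpW : IsPMF pW)
    (chan : 𝒴 → 𝒲 → 𝒳1 → 𝒳2 → ℝ)
    (hchan : ∀ w x1 x2, (∀ y, 0 ≤ chan y w x1 x2) ∧ ∑ y, chan y w x1 x2 = 1)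
    (hcoop : ∀ Q : 𝒳1 × 𝒳2 → ℝ, IsPMF Q →
      mi (fun z : (𝒳1 × 𝒳2) × 𝒴 => Q z.1 * ∑ w, pW w * chan z.2 w z.1.1 z.1.2)
        (fun z => z.1) (fun z => z.2) = 0)
    (p : Ω → ℝ) (hp : IsPMF p)
    (U : Ω → 𝒰) (V : Ω → 𝒱) (V1 : Ω → 𝒱1) (V2 : Ω → 𝒱2)
    (X1 : Ω → 𝒳1) (X2 : Ω → 𝒳2) (W : Ω → 𝒲) (Y : Ω → 𝒴)
    (hfac : ∃ (pU : 𝒰 → ℝ) (pX1 : 𝒳1 → 𝒰 → ℝ) (pX2 : 𝒳2 → 𝒰 → ℝ) (pV : 𝒱 → 𝒲 → ℝ)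
      (pV1 : 𝒱1 → 𝒲 → 𝒳1 → ℝ) (pV2 : 𝒱2 → 𝒲 → 𝒳2 → ℝ),
      IsPMF pU ∧
      (∀ u, (∀ x1, 0 ≤ pX1 x1 u) ∧ ∑ x1, pX1 x1 u = 1) ∧
      (∀ u, (∀ x2, 0 ≤ pX2 x2 u) ∧ ∑ x2, pX2 x2 u = 1) ∧
      (∀ w, (∀ v, 0 ≤ pV v w) ∧ ∑ v, pV v w = 1) ∧
      (∀ w x1, (∀ v1, 0 ≤ pV1 v1 w x1) ∧ ∑ v1, pV1 v1 w x1 = 1) ∧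
      (∀ w x2, (∀ v2, 0 ≤ pV2 v2 w x2) ∧ ∑ v2, pV2 v2 w x2 = 1) ∧
      ∀ u v v1 v2 x1 x2 w y,
        distOf p (fun ω => (U ω, V ω, V1 ω, V2 ω, X1 ω, X2 ω, W ω, Y ω))
            (u, v, v1, v2, x1, x2, w, y)
          = pU u * pX1 x1 u * pX2 x2 u * pW w * pV v w * pV1 v1 w x1 * pV2 v2 w x2 *
            chan y w x1 x2)
    (R0 R01 R02 R1 R2 : ℝ)
    (hR0nn : 0 ≤ R0) (hR01nn : 0 ≤ R01) (hR02nn : 0 ≤ R02)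
    (hR1nn : 0 ≤ R1) (hR2nn : 0 ≤ R2)
    (hub : R0 + R1 + R2 + R01 + R02
      ≤ mi p (fun ω => (X1 ω, X2 ω)) (fun ω => (Y ω, V1 ω, V2 ω, V ω)))
    (hlb : R01 + R02 + R0
      ≥ cmi p (fun ω => (X1 ω, X2 ω, W ω)) (fun ω => (V1 ω, V2 ω, V ω)) Y) :
    R1 = 0 ∧ R2 = 0 :=
  stmt_5_general pW hpW chan hchan hcoop p hp U V V1 V2 X1 X2 W Y hfac R0 R01 R02 R1 R2 hR1nn hR2nn
    hub hlb
end

section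
/- Let (U,V,V1,V2,X1,X2,W,Y) be finitely supported random variables whose joint pmf factors as P_U(u)·P_{X1|U}(x1|u)·P_{X2|U}(x2|u)·P_W(w)·P_{V|W}(v|w)·P_{V1|W,X1}(v1|w,x1)·P_{V2|W,X2}(v2|w,x2)·P_{Y|W,X1,X2}(y|w,x1,x2). If for every x2 ∈ 𝒳2 and every pmf Q on 𝒳1 the mutual information I(X1; Y,W) computed under the joint distribution Q(x1)·P_W(w)·P_{Y|W,X1,X2}(y|w,x1,x2) equals zero, then I(X1; Y,V2,V | X2,U) = 0. -/
attribute [local instance] Classical.propDecidable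

/-!
Feeding the input law that puts mass `1/2` on each of two inputs `a`, `b` into the zero-capacity
hypothesis makes the Jensen gap of `negMulLog` vanish, so by strict concavity the output laws
`pW w * chan y w a x2` and `pW w * chan y w b x2` agree. Hence the law of `(Y, V2, V)` given
`(X1, X2, U)` does not depend on `X1`: the joint law of `(X1, (Y, V2, V), (X2, U))` factors as
`a(x1, z) * b(y, z)`, and for such a law the four entropies in the conditional mutual information
cancel by the chain rule.
-/

open Finset Real

section Marginals

variable {Ω α β γ : Type*} [Fintype Ω] (p : Ω → ℝ)

lemma distOf_eq_sum_distOf_pair_fst [Fintype β] (X : Ω → α) (Y : Ω → β) (x : α) :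
    distOf p X x = ∑ y, distOf p (fun ω => (X ω, Y ω)) (x, y) := by
  unfold distOf
  rw [sum_comm]
  refine sum_congr rfl fun ω _ => ?_
  by_cases h : X ω = x <;> simp [h]

lemma distOf_eq_sum_distOf_pair_snd [Fintype α] (X : Ω → α) (Y : Ω → β) (y : β) :
    distOf p Y y = ∑ x, distOf p (fun ω => (X ω, Y ω)) (x, y) := by
  unfold distOf
  rw [sum_comm]
  refine sum_congr rfl fun ω _ => ?_
  by_cases h : Y ω = y <;> simp [h]

lemma distOf_pair_eq_sum_distOf_triple [Fintype β] (X : Ω → α) (Y : Ω → β) (Z : Ω → γ)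
    (x : α) (z : γ) :
    distOf p (fun ω => (X ω, Z ω)) (x, z)
      = ∑ y, distOf p (fun ω => (X ω, Y ω, Z ω)) (x, y, z) := by
  unfold distOf
  rw [sum_comm]
  refine sum_congr rfl fun ω _ => ?_
  by_cases hx : X ω = x <;> by_cases hz : Z ω = z <;> simp [hx, hz]

lemma distOf_comp [Fintype α] (T : Ω → α) (f : α → β) (b : β) :
    distOf p (fun ω => f (T ω)) b = ∑ a, if f a = b then distOf p T a else 0 := by
  unfold distOf
  simp only [ite_sum_zero]
  rw [sum_comm]
  refine sum_congr rfl fun ω _ => ?_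
  simp_rw [← ite_and, and_comm, ite_and, sum_ite_eq, mem_univ, if_true]

lemma distOf_apply_of_injective {f : Ω → α} (hf : Function.Injective f) (ω : Ω) :
    distOf p f (f ω) = p ω := by
  simp [distOf, hf.eq_iff]

end Marginals

lemma ent_eq_sum_negMulLog {Ω α : Type*} [Fintype Ω] [Fintype α] (p : Ω → ℝ) (X : Ω → α) :
    ent p X = (∑ a, negMulLog (distOf p X a)) / log 2 := by
  simp only [ent, negMulLog, logb, sum_div]
  refine sum_congr rfl fun a _ => ?_
  ring

lemma sum_negMulLog_mul {ι κ : Type*} [Fintype ι] [Fintype κ] (A : ι → ℝ) (B : ι → κ → ℝ)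
    (hB : ∀ i, ∑ k, B i k = 1) :
    ∑ i, ∑ k, negMulLog (A i * B i k)
      = ∑ i, negMulLog (A i) + ∑ i, A i * ∑ k, negMulLog (B i k) := by
  simp only [negMulLog_mul, sum_add_distrib, ← sum_mul, hB, one_mul, mul_sum]

section Factorization

variable {Ω α β γ : Type*} [Fintype Ω] [Fintype α] [Fintype β] [Fintype γ] (p : Ω → ℝ)

theorem mi_eq_of_distOf_eq_mul (X : Ω → α) (Y : Ω → β) (Q : α → ℝ) (K : α → β → ℝ)
    (hK : ∀ x, ∑ y, K x y = 1) (h : ∀ x y, distOf p (fun ω => (X ω, Y ω)) (x, y) = Q x * K x y) :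
    mi p X Y = (∑ y, negMulLog (∑ x, Q x * K x y) - ∑ x, Q x * ∑ y, negMulLog (K x y)) / log 2 := by
  have hX : ∀ x, distOf p X x = Q x := fun x => by
    rw [distOf_eq_sum_distOf_pair_fst p X Y]
    simp only [h, ← mul_sum, hK, mul_one]
  have hY : ∀ y, distOf p Y y = ∑ x, Q x * K x y := fun y => by
    rw [distOf_eq_sum_distOf_pair_snd p X Y]
    simp only [h]
  have hXY : ∑ t, negMulLog (distOf p (fun ω => (X ω, Y ω)) t)
      = ∑ x, negMulLog (Q x) + ∑ x, Q x * ∑ y, negMulLog (K x y) := by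
    rw [Fintype.sum_prod_type]
    simp only [h]
    exact sum_negMulLog_mul Q K hK
  simp only [mi, ent_eq_sum_negMulLog, hX, hY, hXY]
  ring

theorem cmi_eq_zero_of_distOf_eq_mul (X : Ω → α) (Y : Ω → β) (Z : Ω → γ) (a : α → γ → ℝ)
    (b : β → γ → ℝ) (hb : ∀ z, ∑ y, b y z = 1)
    (h : ∀ x y z, distOf p (fun ω => (X ω, Y ω, Z ω)) (x, y, z) = a x z * b y z) :
    cmi p X Y Z = 0 := by
  set c : γ → ℝ := fun z => ∑ x, a x z
  have hXZ : ∀ x z, distOf p (fun ω => (X ω, Z ω)) (x, z) = a x z := fun x z => by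
    rw [distOf_pair_eq_sum_distOf_triple p X Y Z]
    simp only [h, ← mul_sum, hb, mul_one]
  have hZ : ∀ z, distOf p Z z = c z := fun z => by
    rw [distOf_eq_sum_distOf_pair_snd p X Z]
    simp only [hXZ, c]
  have hYZ : ∀ y z, distOf p (fun ω => (Y ω, Z ω)) (y, z) = c z * b y z := fun y z => by
    rw [distOf_eq_sum_distOf_pair_snd p X (fun ω => (Y ω, Z ω))]
    simp only [h, c, sum_mul]
  have hSXZ : ∑ t, negMulLog (distOf p (fun ω => (X ω, Z ω)) t)
      = ∑ x, ∑ z, negMulLog (a x z) := by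
    simp only [Fintype.sum_prod_type, hXZ]
  have hSYZ : ∑ t, negMulLog (distOf p (fun ω => (Y ω, Z ω)) t)
      = ∑ z, negMulLog (c z) + ∑ z, c z * ∑ y, negMulLog (b y z) := by
    simp only [Fintype.sum_prod_type, hYZ]
    rw [sum_comm]
    exact sum_negMulLog_mul c (fun z y => b y z) hb
  have hSXYZ : ∑ t, negMulLog (distOf p (fun ω => (X ω, Y ω, Z ω)) t)
      = ∑ x, ∑ z, negMulLog (a x z) + ∑ z, c z * ∑ y, negMulLog (b y z) := by
    simp only [Fintype.sum_prod_type, h]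
    calc _ = ∑ x, (∑ z, negMulLog (a x z) + ∑ z, a x z * ∑ y, negMulLog (b y z)) :=
          sum_congr rfl fun x _ => by
            rw [sum_comm]
            exact sum_negMulLog_mul _ (fun z y => b y z) hb
      _ = _ := by
          rw [sum_add_distrib, sum_comm (s := univ) (t := univ) (f := fun x z => a x z * _)]
          simp only [c, sum_mul]
  simp only [cmi, ent_eq_sum_negMulLog, hZ, hSXZ, hSYZ, hSXYZ]
  ring

end Factorization

lemma eq_of_sum_negMulLog_midpoint_eq {κ : Type*} [Fintype κ] {f g : κ → ℝ}
    (hf : ∀ k, 0 ≤ f k) (hg : ∀ k, 0 ≤ g k)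
    (h : ∑ k, negMulLog ((f k + g k) / 2) = (∑ k, negMulLog (f k) + ∑ k, negMulLog (g k)) / 2) :
    f = g := by
  have mid : ∀ k, (1 / 2 : ℝ) • f k + (1 / 2 : ℝ) • g k = (f k + g k) / 2 := fun k => by
    simp only [smul_eq_mul]; ring
  have gap_nonneg : ∀ k ∈ univ,
      0 ≤ negMulLog ((f k + g k) / 2) - (negMulLog (f k) + negMulLog (g k)) / 2 := fun k _ => by
    have := concaveOn_negMulLog.2 (Set.mem_Ici.2 (hf k)) (Set.mem_Ici.2 (hg k))
      (by norm_num : (0 : ℝ) ≤ 1 / 2) (by norm_num : (0 : ℝ) ≤ 1 / 2) (by norm_num)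
    rw [mid, smul_eq_mul, smul_eq_mul] at this
    linarith
  have gap_sum :
      ∑ k, (negMulLog ((f k + g k) / 2) - (negMulLog (f k) + negMulLog (g k)) / 2) = 0 := by
    rw [sum_sub_distrib, ← sum_div, sum_add_distrib, h, sub_self]
  funext k
  by_contra hne
  have := strictConcaveOn_negMulLog.2 (Set.mem_Ici.2 (hf k)) (Set.mem_Ici.2 (hg k)) hne
    (by norm_num : (0 : ℝ) < 1 / 2) (by norm_num : (0 : ℝ) < 1 / 2) (by norm_num)
  rw [mid, smul_eq_mul, smul_eq_mul] at this
  have := (sum_eq_zero_iff_of_nonneg gap_nonneg).1 gap_sum k (mem_univ k)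
  linarith

theorem channel_eq_of_mi_eq_zero {α 𝒲 𝒴 : Type*} [Fintype α] [Fintype 𝒲] [Fintype 𝒴]
    (pW : 𝒲 → ℝ) (hpW : IsPMF pW) (c : 𝒴 → 𝒲 → α → ℝ)
    (hc : ∀ w x, (∀ y, 0 ≤ c y w x) ∧ ∑ y, c y w x = 1)
    (hz : ∀ Q : α → ℝ, IsPMF Q →
      mi (fun z : α × 𝒲 × 𝒴 => Q z.1 * pW z.2.1 * c z.2.2 z.2.1 z.1)
        (fun z => z.1) (fun z => (z.2.2, z.2.1)) = 0)
    (a b : α) (y : 𝒴) (w : 𝒲) :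
    pW w * c y w a = pW w * c y w b := by
  set K : α → 𝒴 × 𝒲 → ℝ := fun x t => pW t.2 * c t.1 t.2 x
  have hK : ∀ x, ∑ t, K x t = 1 := fun x => by
    simp only [K, Fintype.sum_prod_type]
    rw [sum_comm]
    simp only [← mul_sum, (hc _ x).2, mul_one, hpW.2]
  have hinj : Function.Injective fun z : α × 𝒲 × 𝒴 => (z.1, z.2.2, z.2.1) := by
    rintro ⟨x, w, y⟩ ⟨x', w', y'⟩ h
    simp_all
  have hdist : ∀ (Q : α → ℝ) x t,
      distOf (fun z : α × 𝒲 × 𝒴 => Q z.1 * pW z.2.1 * c z.2.2 z.2.1 z.1)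
        (fun z => (z.1, z.2.2, z.2.1)) (x, t) = Q x * K x t := fun Q x t => by
    rw [← mul_assoc]
    exact distOf_apply_of_injective _ hinj (x, t.2, t.1)
  set Q : α → ℝ := Pi.single a (1 / 2) + Pi.single b (1 / 2)
  have hmean : ∀ E : α → ℝ, ∑ x, Q x * E x = (E a + E b) / 2 := fun E => by
    simp only [Q, Pi.add_apply, Pi.single_apply, add_mul, ite_mul, zero_mul, sum_add_distrib,
      sum_ite_eq', mem_univ, if_true]
    ring
  have hQ : IsPMF Q := by
    refine ⟨fun x => ?_, by simpa using hmean 1⟩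
    simp only [Q, Pi.add_apply, Pi.single_apply]
    split_ifs <;> norm_num
  have hmi := hz Q hQ
  rw [mi_eq_of_distOf_eq_mul _ _ _ Q K hK (hdist Q)] at hmi
  simp only [hmean, div_eq_zero_iff, (log_pos one_lt_two).ne', or_false, sub_eq_zero] at hmi
  have hKpos : ∀ x t, 0 ≤ K x t := fun x t => mul_nonneg (hpW.1 _) ((hc _ x).1 _)
  exact congrFun (eq_of_sum_negMulLog_midpoint_eq (hKpos a) (hKpos b) hmi) (y, w)

noncomputable def outputKernel {𝒱 𝒱2 𝒳1 𝒳2 𝒲 𝒴 : Type*} [Fintype 𝒲] (pW : 𝒲 → ℝ)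
    (pV : 𝒱 → 𝒲 → ℝ) (pV2 : 𝒱2 → 𝒲 → 𝒳2 → ℝ) (chan : 𝒴 → 𝒲 → 𝒳1 → 𝒳2 → ℝ) (x1 : 𝒳1) (x2 : 𝒳2)
    (b : 𝒴 × 𝒱2 × 𝒱) : ℝ :=
  ∑ w, pV b.2.2 w * pV2 b.2.1 w x2 * (pW w * chan b.1 w x1 x2)

theorem sum_outputKernel {𝒱 𝒱2 𝒳1 𝒳2 𝒲 𝒴 : Type*} [Fintype 𝒱] [Fintype 𝒱2] [Fintype 𝒲]
    [Fintype 𝒴] {pW : 𝒲 → ℝ} {pV : 𝒱 → 𝒲 → ℝ} {pV2 : 𝒱2 → 𝒲 → 𝒳2 → ℝ}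
    {chan : 𝒴 → 𝒲 → 𝒳1 → 𝒳2 → ℝ} (hpW : ∑ w, pW w = 1) (hpV : ∀ w, ∑ v, pV v w = 1)
    (hpV2 : ∀ w x2, ∑ v2, pV2 v2 w x2 = 1) (hchan : ∀ w x1 x2, ∑ y, chan y w x1 x2 = 1)
    (x1 : 𝒳1) (x2 : 𝒳2) :
    ∑ b, outputKernel pW pV pV2 chan x1 x2 b = 1 := by
  simp only [outputKernel]
  rw [sum_comm]
  simp only [Fintype.sum_prod_type, ← sum_mul, hpV, one_mul, hpV2, ← mul_sum, hchan, mul_one, hpW]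

theorem distOf_X1_YV2V_X2U {Ω 𝒰 𝒱 𝒱1 𝒱2 𝒳1 𝒳2 𝒲 𝒴 : Type*}
    [Fintype Ω] [Fintype 𝒰] [Fintype 𝒱] [Fintype 𝒱1] [Fintype 𝒱2]
    [Fintype 𝒳1] [Fintype 𝒳2] [Fintype 𝒲] [Fintype 𝒴]
    {p : Ω → ℝ} {U : Ω → 𝒰} {V : Ω → 𝒱} {V1 : Ω → 𝒱1} {V2 : Ω → 𝒱2}
    {X1 : Ω → 𝒳1} {X2 : Ω → 𝒳2} {W : Ω → 𝒲} {Y : Ω → 𝒴}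
    {pU : 𝒰 → ℝ} {pX1 : 𝒳1 → 𝒰 → ℝ} {pX2 : 𝒳2 → 𝒰 → ℝ} {pW : 𝒲 → ℝ} {pV : 𝒱 → 𝒲 → ℝ}
    {pV1 : 𝒱1 → 𝒲 → 𝒳1 → ℝ} {pV2 : 𝒱2 → 𝒲 → 𝒳2 → ℝ} {chan : 𝒴 → 𝒲 → 𝒳1 → 𝒳2 → ℝ}
    (hjoint : ∀ u v v1 v2 x1 x2 w y,
      distOf p (fun ω => (U ω, V ω, V1 ω, V2 ω, X1 ω, X2 ω, W ω, Y ω))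
          (u, v, v1, v2, x1, x2, w, y)
        = pU u * pX1 x1 u * pX2 x2 u * pW w * pV v w * pV1 v1 w x1 * pV2 v2 w x2 *
          chan y w x1 x2)
    (hpV1 : ∀ w x1, ∑ v1, pV1 v1 w x1 = 1) (x1 : 𝒳1) (b : 𝒴 × 𝒱2 × 𝒱) (x2 : 𝒳2) (u : 𝒰) :
    distOf p (fun ω => (X1 ω, (Y ω, V2 ω, V ω), (X2 ω, U ω))) (x1, b, (x2, u))
      = pU u * pX1 x1 u * pX2 x2 u * outputKernel pW pV pV2 chan x1 x2 b := by
  rw [distOf_comp p (fun ω => (U ω, V ω, V1 ω, V2 ω, X1 ω, X2 ω, W ω, Y ω))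
    (fun t => (t.2.2.2.2.1, (t.2.2.2.2.2.2.2, t.2.2.2.1, t.2.1), (t.2.2.2.2.2.1, t.1)))]
  simp only [Fintype.sum_prod_type, hjoint, Prod.ext_iff, ite_and, sum_ite_irrel, sum_const_zero,
    sum_ite_eq', mem_univ, if_true, outputKernel]
  rw [sum_comm, mul_sum]
  refine sum_congr rfl fun w _ => ?_
  rw [← sum_mul, ← sum_mul, ← mul_sum, hpV1]
  ring

theorem stmt_7_general
    {Ω 𝒰 𝒱 𝒱1 𝒱2 𝒳1 𝒳2 𝒲 𝒴 : Type*}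
    [Fintype Ω] [Fintype 𝒰] [Fintype 𝒱] [Fintype 𝒱1] [Fintype 𝒱2]
    [Fintype 𝒳1] [Fintype 𝒳2] [Fintype 𝒲] [Fintype 𝒴]
    (pW : 𝒲 → ℝ) (hpW : IsPMF pW)
    (chan : 𝒴 → 𝒲 → 𝒳1 → 𝒳2 → ℝ)
    (hchan : ∀ w x1 x2, (∀ y, 0 ≤ chan y w x1 x2) ∧ ∑ y, chan y w x1 x2 = 1)
    (p : Ω → ℝ)
    (U : Ω → 𝒰) (V : Ω → 𝒱) (V1 : Ω → 𝒱1) (V2 : Ω → 𝒱2)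
    (X1 : Ω → 𝒳1) (X2 : Ω → 𝒳2) (W : Ω → 𝒲) (Y : Ω → 𝒴)
    (hfac : ∃ (pU : 𝒰 → ℝ) (pX1 : 𝒳1 → 𝒰 → ℝ) (pX2 : 𝒳2 → 𝒰 → ℝ) (pV : 𝒱 → 𝒲 → ℝ)
      (pV1 : 𝒱1 → 𝒲 → 𝒳1 → ℝ) (pV2 : 𝒱2 → 𝒲 → 𝒳2 → ℝ),
      IsPMF pU ∧
      (∀ u, (∀ x1, 0 ≤ pX1 x1 u) ∧ ∑ x1, pX1 x1 u = 1) ∧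
      (∀ u, (∀ x2, 0 ≤ pX2 x2 u) ∧ ∑ x2, pX2 x2 u = 1) ∧
      (∀ w, (∀ v, 0 ≤ pV v w) ∧ ∑ v, pV v w = 1) ∧
      (∀ w x1, (∀ v1, 0 ≤ pV1 v1 w x1) ∧ ∑ v1, pV1 v1 w x1 = 1) ∧
      (∀ w x2, (∀ v2, 0 ≤ pV2 v2 w x2) ∧ ∑ v2, pV2 v2 w x2 = 1) ∧
      ∀ u v v1 v2 x1 x2 w y,
        distOf p (fun ω => (U ω, V ω, V1 ω, V2 ω, X1 ω, X2 ω, W ω, Y ω))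
            (u, v, v1, v2, x1, x2, w, y)
          = pU u * pX1 x1 u * pX2 x2 u * pW w * pV v w * pV1 v1 w x1 * pV2 v2 w x2 *
            chan y w x1 x2)
    (hzero : ∀ x2 : 𝒳2, ∀ Q : 𝒳1 → ℝ, IsPMF Q →
      mi (fun z : 𝒳1 × 𝒲 × 𝒴 => Q z.1 * pW z.2.1 * chan z.2.2 z.2.1 z.1 x2)
        (fun z => z.1) (fun z => (z.2.2, z.2.1)) = 0) :
    cmi p X1 (fun ω => (Y ω, V2 ω, V ω)) (fun ω => (X2 ω, U ω)) = 0 := by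
  obtain ⟨pU, pX1, pX2, pV, pV1, pV2, -, hpX1, -, hpV, hpV1, hpV2, hjoint⟩ := hfac
  set G := outputKernel pW pV pV2 chan
  have hG_const : ∀ x1 x1' x2 b, G x1 x2 b = G x1' x2 b := fun x1 x1' x2 b =>
    sum_congr rfl fun w _ => by
      rw [channel_eq_of_mi_eq_zero pW hpW (fun y w x1 => chan y w x1 x2)
        (fun w x1 => hchan w x1 x2) (hzero x2) x1 x1' b.1 w]
  refine cmi_eq_zero_of_distOf_eq_mul p _ _ _ (fun x1 z => pU z.2 * pX1 x1 z.2 * pX2 z.1 z.2)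
    -- averaging over `x1` gives the `x1`-free kernel without choosing an element of `𝒳1`
    (fun b z => ∑ x1, pX1 x1 z.2 * G x1 z.1 b) (fun z => ?_) (fun x1 b z => ?_)
  · rw [sum_comm]
    simp only [← mul_sum, sum_outputKernel hpW.2 (fun w => (hpV w).2) (fun w x2 => (hpV2 w x2).2)
      (fun w x1 x2 => (hchan w x1 x2).2), mul_one, (hpX1 z.2).2, G]
  · rw [distOf_X1_YV2V_X2U hjoint (fun w x1 => (hpV1 w x1).2)]
    simp only [hG_const _ x1, ← sum_mul, (hpX1 z.2).2, one_mul, G]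

/-- if the channel from the uninformed Transmitter 1 to the informed
receiver has zero capacity, then `I(X1; Y,V2,V | X2,U) = 0`. -/
theorem stmt_7
    {Ω 𝒰 𝒱 𝒱1 𝒱2 𝒳1 𝒳2 𝒲 𝒴 : Type*}
    [Fintype Ω] [Fintype 𝒰] [Fintype 𝒱] [Fintype 𝒱1] [Fintype 𝒱2]
    [Fintype 𝒳1] [Fintype 𝒳2] [Fintype 𝒲] [Fintype 𝒴]
    (pW : 𝒲 → ℝ) (hpW : IsPMF pW)
    (chan : 𝒴 → 𝒲 → 𝒳1 → 𝒳2 → ℝ)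
    (hchan : ∀ w x1 x2, (∀ y, 0 ≤ chan y w x1 x2) ∧ ∑ y, chan y w x1 x2 = 1)
    (p : Ω → ℝ) (hp : IsPMF p)
    (U : Ω → 𝒰) (V : Ω → 𝒱) (V1 : Ω → 𝒱1) (V2 : Ω → 𝒱2)
    (X1 : Ω → 𝒳1) (X2 : Ω → 𝒳2) (W : Ω → 𝒲) (Y : Ω → 𝒴)
    (hfac : ∃ (pU : 𝒰 → ℝ) (pX1 : 𝒳1 → 𝒰 → ℝ) (pX2 : 𝒳2 → 𝒰 → ℝ) (pV : 𝒱 → 𝒲 → ℝ)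
      (pV1 : 𝒱1 → 𝒲 → 𝒳1 → ℝ) (pV2 : 𝒱2 → 𝒲 → 𝒳2 → ℝ),
      IsPMF pU ∧
      (∀ u, (∀ x1, 0 ≤ pX1 x1 u) ∧ ∑ x1, pX1 x1 u = 1) ∧
      (∀ u, (∀ x2, 0 ≤ pX2 x2 u) ∧ ∑ x2, pX2 x2 u = 1) ∧
      (∀ w, (∀ v, 0 ≤ pV v w) ∧ ∑ v, pV v w = 1) ∧
      (∀ w x1, (∀ v1, 0 ≤ pV1 v1 w x1) ∧ ∑ v1, pV1 v1 w x1 = 1) ∧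
      (∀ w x2, (∀ v2, 0 ≤ pV2 v2 w x2) ∧ ∑ v2, pV2 v2 w x2 = 1) ∧
      ∀ u v v1 v2 x1 x2 w y,
        distOf p (fun ω => (U ω, V ω, V1 ω, V2 ω, X1 ω, X2 ω, W ω, Y ω))
            (u, v, v1, v2, x1, x2, w, y)
          = pU u * pX1 x1 u * pX2 x2 u * pW w * pV v w * pV1 v1 w x1 * pV2 v2 w x2 *
            chan y w x1 x2)
    (hzero : ∀ x2 : 𝒳2, ∀ Q : 𝒳1 → ℝ, IsPMF Q →
      mi (fun z : 𝒳1 × 𝒲 × 𝒴 => Q z.1 * pW z.2.1 * chan z.2.2 z.2.1 z.1 x2)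
        (fun z => z.1) (fun z => (z.2.2, z.2.1)) = 0) :
    cmi p X1 (fun ω => (Y ω, V2 ω, V ω)) (fun ω => (X2 ω, U ω)) = 0 :=
  stmt_7_general pW hpW chan hchan p U V V1 V2 X1 X2 W Y hfac hzero
end
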